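/- If ε/n ≤ 1 - 1/q, then the cardinality of a Hamming ball of radius ε in Z_q^n is at most q^{n·h_q(ε/n)}, where h_q is the q-ary entropy function. -/

import Mathlib

/-!
Put `p = ε / n`. The condition `p ≤ 1 - 1/q` says `p ≤ (q - 1)(1 - p)`, so for `i ≤ ε` the term
`C(n,i) (q-1)^i p^ε (1-p)^(n-ε)` is at most `(q-1)^ε` times the binomial term
`C(n,i) p^i (1-p)^(n-i)`.
Summing, the ball size times `p^ε (1-p)^(n-ε)` is at most `(q-1)^ε (p + (1-p))^n = (q-1)^ε`, and
`(q-1)^ε / (p^ε (1-p)^(n-ε))` is exactly `q^(n h_q(p))`.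
-/

open Finset

/-- The q-ary entropy function (base-q logarithms), with h_q(0) = h_q(1) = 0 by the
`Real.logb` convention `logb q 0 = 0`. -/
noncomputable def qEntropy (q : ℕ) (x : ℝ) : ℝ :=
  x * Real.logb q (q - 1) - x * Real.logb q x - (1 - x) * Real.logb q (1 - x)

section BinomialTail

variable {R : Type*} [CommSemiring R] [PartialOrder R] [IsOrderedRing R] {p s r : R} {i k n : ℕ}

theorem pow_mul_pow_mul_pow_le (hp : 0 ≤ p) (hs : 0 ≤ s) (hr : 0 ≤ r) (hpr : p ≤ r * s)
    (hik : i ≤ k) (hkn : k ≤ n) :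
    r ^ i * (p ^ k * s ^ (n - k)) ≤ r ^ k * (p ^ i * s ^ (n - i)) := by
  obtain ⟨d, rfl⟩ := Nat.exists_eq_add_of_le hik
  obtain ⟨e, rfl⟩ := Nat.exists_eq_add_of_le hkn
  rw [Nat.add_sub_cancel_left, add_assoc, Nat.add_sub_cancel_left]
  calc r ^ i * (p ^ (i + d) * s ^ e) = r ^ i * p ^ i * s ^ e * p ^ d := by ring
    _ ≤ r ^ i * p ^ i * s ^ e * (r * s) ^ d := by gcongr
    _ = r ^ (i + d) * (p ^ i * s ^ (d + e)) := by ring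

theorem sum_choose_mul_pow_mul_le (hp : 0 ≤ p) (hs : 0 ≤ s) (hr : 0 ≤ r) (hpr : p ≤ r * s)
    (hkn : k ≤ n) :
    (∑ i ∈ range (k + 1), (n.choose i : R) * r ^ i) * (p ^ k * s ^ (n - k)) ≤
      r ^ k * (p + s) ^ n := by
  calc (∑ i ∈ range (k + 1), (n.choose i : R) * r ^ i) * (p ^ k * s ^ (n - k))
      = ∑ i ∈ range (k + 1), (n.choose i : R) * (r ^ i * (p ^ k * s ^ (n - k))) := by
        rw [sum_mul]; simp only [mul_assoc]
    _ ≤ ∑ i ∈ range (k + 1), (n.choose i : R) * (r ^ k * (p ^ i * s ^ (n - i))) := by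
        refine sum_le_sum fun i hi => mul_le_mul_of_nonneg_left ?_ (Nat.cast_nonneg _)
        exact pow_mul_pow_mul_pow_le hp hs hr hpr (Nat.lt_succ_iff.mp (mem_range.mp hi)) hkn
    _ ≤ ∑ i ∈ range (n + 1), (n.choose i : R) * (r ^ k * (p ^ i * s ^ (n - i))) := by
        gcongr
    _ = r ^ k * (p + s) ^ n := by
        rw [add_pow, mul_sum]
        exact sum_congr rfl fun _ _ => by ring

end BinomialTail

theorem rpow_mul_qEntropy {q : ℕ} (hq : 1 < q) {p : ℝ} (hp₀ : 0 < p) (hp₁ : p < 1) (x : ℝ) :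
    (q : ℝ) ^ (x * qEntropy q p) =
      ((q : ℝ) - 1) ^ (x * p) / (p ^ (x * p) * (1 - p) ^ (x * (1 - p))) := by
  have hq₀ : (0 : ℝ) < q := by positivity
  have hq₁ : (q : ℝ) ≠ 1 := by exact_mod_cast hq.ne'
  have hq₂ : (0 : ℝ) < q - 1 := by
    rw [sub_pos]; exact_mod_cast hq
  have hexp : x * qEntropy q p = Real.logb q (q - 1) * (x * p) - Real.logb q p * (x * p)
      - Real.logb q (1 - p) * (x * (1 - p)) := by
    unfold qEntropy; ring
  rw [hexp, Real.rpow_sub hq₀, Real.rpow_sub hq₀, div_div, Real.rpow_mul hq₀.le,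
    Real.rpow_mul hq₀.le, Real.rpow_mul hq₀.le, Real.rpow_logb hq₀ hq₁ hq₂,
    Real.rpow_logb hq₀ hq₁ hp₀, Real.rpow_logb hq₀ hq₁ (sub_pos.mpr hp₁)]

/-- If ε/n ≤ 1 - 1/q, then the Hamming ball of radius ε in Z_q^n has
cardinality at most q^{n·h_q(ε/n)}. -/
theorem hamming_ball_card_le_entropy_bound (q n ε : ℕ) (hq : 2 ≤ q) (hn : 1 ≤ n)
    (hε : (ε : ℝ) / n ≤ 1 - 1 / q) :
    ((∑ i ∈ Finset.range (ε + 1), n.choose i * (q - 1) ^ i : ℕ) : ℝ) ≤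
      (q : ℝ) ^ ((n : ℝ) * qEntropy q ((ε : ℝ) / n)) := by
  rcases Nat.eq_zero_or_pos ε with rfl | hε₀
  · simp [qEntropy]
  have hq₁ : (1 : ℝ) < q := by exact_mod_cast hq
  have hq₀ : (0 : ℝ) < q := by linarith
  have hn₀ : (0 : ℝ) < n := by exact_mod_cast hn
  set p : ℝ := ε / n
  have hp₀ : 0 < p := div_pos (by exact_mod_cast hε₀) hn₀
  have hp₁ : p < 1 := hε.trans_lt (sub_lt_self 1 (by positivity))
  have hεn : ε ≤ n := by exact_mod_cast ((div_lt_one hn₀).mp hp₁).le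
  have hpr : p ≤ ((q : ℝ) - 1) * (1 - p) := by
    have hqp : q * p ≤ q - 1 := by
      simpa [mul_one_sub, hq₀.ne'] using mul_le_mul_of_nonneg_left hε hq₀.le
    linarith
  have hrhs : (q : ℝ) ^ ((n : ℝ) * qEntropy q p) =
      ((q : ℝ) - 1) ^ ε / (p ^ ε * (1 - p) ^ (n - ε)) := by
    rw [rpow_mul_qEntropy hq hp₀ hp₁, mul_one_sub, mul_div_cancel₀ _ hn₀.ne', ← Nat.cast_sub hεn]
    simp only [Real.rpow_natCast]
  rw [hrhs, le_div_iff₀ (by positivity)]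
  push_cast [Nat.cast_sub (by omega : 1 ≤ q)]
  simpa using
    sum_choose_mul_pow_mul_le hp₀.le (sub_nonneg.mpr hp₁.le) (sub_nonneg.mpr hq₁.le) hpr hεn
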